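/- Let L be an e-cyclic residuated lattice and P ⊆ L a nonempty subset. Then P is a prefilter of L (that is, x·y ∈ P for all x, y ∈ P, and for all x ∈ P and y ∈ L, |x| ≤ |y| implies y ∈ P) if and only if P is a convex subalgebra of L. -/

import Mathlib

universe u

/-- A residuated lattice: a lattice-ordered monoid with left and right residuals.
`ldiv x z` is `x \ z` and `rdiv z y` is `z / y`. -/
class ResiduatedLattice (α : Type u) extends Lattice α, Monoid α where
  ldiv : α → α → α
  rdiv : α → α → α
  mul_le_iff_le_ldiv : ∀ x y z : α, x * y ≤ z ↔ y ≤ ldiv x z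
  mul_le_iff_le_rdiv : ∀ x y z : α, x * y ≤ z ↔ x ≤ rdiv z y

namespace ResiduatedLattice

variable {α : Type u} [ResiduatedLattice α]

/-- `L` is e-cyclic if `x \ e = e / x` for all `x`. -/
def ECyclic (α : Type u) [ResiduatedLattice α] : Prop :=
  ∀ x : α, ldiv x 1 = rdiv 1 x

/-- Absolute value: `|x| = x ⊓ (e / x) ⊓ e`. -/
def absv (x : α) : α := x ⊓ rdiv 1 x ⊓ 1

/-- A convex subalgebra: contains `e`, closed under all the operations, and order-convex. -/
structure IsConvexSubalgebra (H : Set α) : Prop where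
  one_mem : (1 : α) ∈ H
  mul_mem : ∀ ⦃x⦄, x ∈ H → ∀ ⦃y⦄, y ∈ H → x * y ∈ H
  sup_mem : ∀ ⦃x⦄, x ∈ H → ∀ ⦃y⦄, y ∈ H → x ⊔ y ∈ H
  inf_mem : ∀ ⦃x⦄, x ∈ H → ∀ ⦃y⦄, y ∈ H → x ⊓ y ∈ H
  ldiv_mem : ∀ ⦃x⦄, x ∈ H → ∀ ⦃y⦄, y ∈ H → ldiv x y ∈ H
  rdiv_mem : ∀ ⦃x⦄, x ∈ H → ∀ ⦃y⦄, y ∈ H → rdiv x y ∈ H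
  convex : ∀ ⦃a⦄, a ∈ H → ∀ ⦃b⦄, b ∈ H → ∀ ⦃x⦄, a ≤ x → x ≤ b → x ∈ H

/-- `C[S]`: the smallest convex subalgebra containing `S`. -/
def convexClosure (S : Set α) : Set α :=
  ⋂₀ {H : Set α | IsConvexSubalgebra H ∧ S ⊆ H}

end ResiduatedLattice

open ResiduatedLattice

/-!
For `c ≤ e` we have `|c| = c`, and `c ≤ |z|` just says `c ≤ z` and `c·z ≤ e`. So a prefilter
containing some `c ≤ e` contains every `z` with `c ≤ z` and `c·z ≤ e`. Each closure property
of a convex subalgebra follows by exhibiting such a `c` below the element in question, namely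
a product of absolute values of the arguments; for the residuals this needs e-cyclicity,
which makes `a·b ≤ e` equivalent to `b·a ≤ e`. Conversely a convex subalgebra containing `x` contains `|x|`,
hence every `|y| ≥ |x|` (below `e`), hence every `y` in the interval `[|y|, |y| \ e]`.
-/

namespace ResiduatedLattice

variable {α : Type u} [ResiduatedLattice α]

instance : MulLeftMono α :=
  ⟨fun _ _ _ h => (mul_le_iff_le_ldiv _ _ _).2 (h.trans ((mul_le_iff_le_ldiv _ _ _).1 le_rfl))⟩

instance : MulRightMono α :=
  ⟨fun _ _ _ h => (mul_le_iff_le_rdiv _ _ _).2 (h.trans ((mul_le_iff_le_rdiv _ _ _).1 le_rfl))⟩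

theorem mul_ldiv_le (x y : α) : x * ldiv x y ≤ y := (mul_le_iff_le_ldiv _ _ _).2 le_rfl

theorem rdiv_mul_le (x y : α) : rdiv x y * y ≤ x := (mul_le_iff_le_rdiv _ _ _).2 le_rfl

theorem ECyclic.mul_le_one_comm (hec : ECyclic α) {a b : α} : a * b ≤ 1 ↔ b * a ≤ 1 := by
  rw [mul_le_iff_le_ldiv, hec, ← mul_le_iff_le_rdiv]

theorem absv_le_self (x : α) : absv x ≤ x := inf_le_left.trans inf_le_left

theorem absv_le_one (x : α) : absv x ≤ 1 := inf_le_right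

theorem absv_mul_le_one (x : α) : absv x * x ≤ 1 :=
  (mul_le_iff_le_rdiv _ _ _).2 (inf_le_left.trans inf_le_right)

theorem absv_mul_absv_le_one (x y : α) : absv x * absv y ≤ 1 :=
  mul_le_one' (absv_le_one x) (absv_le_one y)

theorem le_absv_iff {c z : α} : c ≤ absv z ↔ c ≤ z ∧ c * z ≤ 1 ∧ c ≤ 1 := by
  simp only [absv, le_inf_iff, ← mul_le_iff_le_rdiv, and_assoc]

theorem absv_eq_self {c : α} (hc : c ≤ 1) : absv c = c :=
  (absv_le_self c).antisymm (le_absv_iff.2 ⟨le_rfl, mul_le_one' hc hc, hc⟩)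

structure IsPrefilter (P : Set α) : Prop where
  mul_mem : ∀ x ∈ P, ∀ y ∈ P, x * y ∈ P
  mem_of_absv_le : ∀ x ∈ P, ∀ y : α, absv x ≤ absv y → y ∈ P

namespace IsPrefilter

variable {P : Set α}

theorem absv_mem (hP : IsPrefilter P) {x : α} (hx : x ∈ P) : absv x ∈ P :=
  hP.mem_of_absv_le x hx _ (absv_eq_self (absv_le_one x)).ge

theorem absv_mul_absv_mem (hP : IsPrefilter P) {x y : α} (hx : x ∈ P) (hy : y ∈ P) :
    absv x * absv y ∈ P :=
  hP.mul_mem _ (hP.absv_mem hx) _ (hP.absv_mem hy)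

theorem mem_of_le_of_mul_le_one (hP : IsPrefilter P) {c z : α} (hc : c ∈ P) (hc1 : c ≤ 1)
    (hcz : c ≤ z) (hcz1 : c * z ≤ 1) : z ∈ P :=
  hP.mem_of_absv_le c hc z ((absv_eq_self hc1).trans_le (le_absv_iff.2 ⟨hcz, hcz1, hc1⟩))

theorem one_mem (hP : IsPrefilter P) (hne : P.Nonempty) : (1 : α) ∈ P := by
  obtain ⟨x, hx⟩ := hne
  refine hP.mem_of_le_of_mul_le_one (hP.absv_mem hx) (absv_le_one x) (absv_le_one x) ?_
  rw [mul_one]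
  exact absv_le_one x

theorem convex (hP : IsPrefilter P) {a b x : α} (ha : a ∈ P) (hb : b ∈ P) (hax : a ≤ x)
    (hxb : x ≤ b) : x ∈ P := by
  refine hP.mem_of_le_of_mul_le_one (hP.absv_mul_absv_mem ha hb) (absv_mul_absv_le_one a b)
    ((mul_le_of_le_of_le_one (absv_le_self a) (absv_le_one b)).trans hax) ?_
  calc absv a * absv b * x ≤ absv a * (absv b * b) := by rw [← mul_assoc]; gcongr
    _ ≤ 1 := mul_le_one' (absv_le_one a) (absv_mul_le_one b)

theorem inf_mem (hP : IsPrefilter P) {x y : α} (hx : x ∈ P) (hy : y ∈ P) : x ⊓ y ∈ P :=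
  hP.convex (hP.absv_mul_absv_mem hx hy) hx
    (le_inf (mul_le_of_le_of_le_one (absv_le_self x) (absv_le_one y))
      (mul_le_of_le_one_of_le (absv_le_one x) (absv_le_self y)))
    inf_le_left

theorem sup_mem (hP : IsPrefilter P) {x y : α} (hx : x ∈ P) (hy : y ∈ P) : x ⊔ y ∈ P := by
  refine hP.mem_of_le_of_mul_le_one (hP.absv_mul_absv_mem hy hx) (absv_mul_absv_le_one y x)
    ((mul_le_of_le_one_of_le (absv_le_one y) (absv_le_self x)).trans le_sup_left) ?_
  rw [mul_le_iff_le_ldiv]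
  refine sup_le ((mul_le_iff_le_ldiv _ _ _).1 ?_) ((mul_le_iff_le_ldiv _ _ _).1 ?_)
  · rw [mul_assoc]
    exact mul_le_one' (absv_le_one y) (absv_mul_le_one x)
  · calc absv y * absv x * y ≤ absv y * y := by
          rw [mul_assoc]; gcongr; exact mul_le_of_le_one_left' (absv_le_one x)
      _ ≤ 1 := absv_mul_le_one y

theorem ldiv_mem (hec : ECyclic α) (hP : IsPrefilter P) {x y : α} (hx : x ∈ P) (hy : y ∈ P) :
    ldiv x y ∈ P := by
  refine hP.mem_of_le_of_mul_le_one (hP.mul_mem _ (hP.absv_mul_absv_mem hx hy) _ (hP.absv_mem hx))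
    (mul_le_one' (absv_mul_absv_le_one x y) (absv_le_one x)) ((mul_le_iff_le_ldiv _ _ _).1 ?_) ?_
  · calc x * (absv x * absv y * absv x) = x * absv x * (absv y * absv x) := by
          simp only [mul_assoc]
      _ ≤ y := mul_le_of_le_one_of_le (hec.mul_le_one_comm.1 (absv_mul_le_one x))
          (mul_le_of_le_of_le_one (absv_le_self y) (absv_le_one x))
  · calc absv x * absv y * absv x * ldiv x y ≤ absv y * x * ldiv x y := by
          gcongr
          · exact mul_le_of_le_one_left' (absv_le_one x)
          · exact absv_le_self x
      _ ≤ absv y * y := by rw [mul_assoc]; gcongr; exact mul_ldiv_le x y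
      _ ≤ 1 := absv_mul_le_one y

theorem rdiv_mem (hec : ECyclic α) (hP : IsPrefilter P) {x y : α} (hx : x ∈ P) (hy : y ∈ P) :
    rdiv x y ∈ P := by
  refine hP.mem_of_le_of_mul_le_one (hP.mul_mem _ (hP.absv_mul_absv_mem hy hx) _ (hP.absv_mem hy))
    (mul_le_one' (absv_mul_absv_le_one y x) (absv_le_one y)) ((mul_le_iff_le_rdiv _ _ _).1 ?_)
    (hec.mul_le_one_comm.2 ?_)
  · calc absv y * absv x * absv y * y = absv y * absv x * (absv y * y) := mul_assoc _ _ _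
      _ ≤ x := mul_le_of_le_of_le_one
          (mul_le_of_le_one_of_le (absv_le_one y) (absv_le_self x)) (absv_mul_le_one y)
  · calc rdiv x y * (absv y * absv x * absv y) ≤ rdiv x y * (y * absv x) :=
          mul_le_mul_right
            (mul_le_of_le_of_le_one (mul_le_mul_left (absv_le_self y) _) (absv_le_one y)) _
      _ ≤ x * absv x := by rw [← mul_assoc]; gcongr; exact rdiv_mul_le x y
      _ ≤ 1 := hec.mul_le_one_comm.1 (absv_mul_le_one x)

theorem isConvexSubalgebra (hec : ECyclic α) (hP : IsPrefilter P) (hne : P.Nonempty) :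
    IsConvexSubalgebra P where
  one_mem := hP.one_mem hne
  mul_mem x hx y hy := hP.mul_mem x hx y hy
  sup_mem _ hx _ hy := hP.sup_mem hx hy
  inf_mem _ hx _ hy := hP.inf_mem hx hy
  ldiv_mem _ hx _ hy := hP.ldiv_mem hec hx hy
  rdiv_mem _ hx _ hy := hP.rdiv_mem hec hx hy
  convex _ ha _ hb _ hax hxb := hP.convex ha hb hax hxb

end IsPrefilter

theorem IsConvexSubalgebra.isPrefilter {P : Set α} (h : IsConvexSubalgebra P) :
    IsPrefilter P := by
  refine ⟨fun x hx y hy => h.mul_mem hx hy, fun x hx y hxy => ?_⟩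
  have habsx : absv x ∈ P := h.inf_mem (h.inf_mem hx (h.rdiv_mem h.one_mem hx)) h.one_mem
  have habsy : absv y ∈ P := h.convex habsx h.one_mem hxy (absv_le_one y)
  exact h.convex habsy (h.ldiv_mem habsy h.one_mem) (absv_le_self y)
    ((mul_le_iff_le_ldiv _ _ _).1 (absv_mul_le_one y))

end ResiduatedLattice

/-- a nonempty subset is a prefilter iff it is a convex subalgebra. -/
theorem stmt2 {α : Type u} [ResiduatedLattice α] (hec : ECyclic α)
    (P : Set α) (hP : P.Nonempty) :
    ((∀ x ∈ P, ∀ y ∈ P, x * y ∈ P) ∧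
      (∀ x ∈ P, ∀ y : α, absv x ≤ absv y → y ∈ P)) ↔
    IsConvexSubalgebra P :=
  ⟨fun ⟨hmul, habs⟩ => IsPrefilter.isConvexSubalgebra hec ⟨hmul, habs⟩ hP,
    fun h => ⟨h.isPrefilter.mul_mem, h.isPrefilter.mem_of_absv_le⟩⟩
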